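/- In a completely randomized experiment with N ≥ 2, the sampling variance of the difference-in-means estimator τ̂ over all possible randomizations equals Var(τ̂) = S₁²/N₁ + S₀²/N₀ − S_τ²/N, where S_t² = (1/(N−1))Σ_{i=1}^N {Y_i(t) − Ȳ_t}² for t = 0,1 with Ȳ_t = (1/N)Σ_{i=1}^N Y_i(t), and S_τ² = (1/(N−1))Σ_{i=1}^N (τ_i − τ)² with τ_i = Y_i(1) − Y_i(0) and τ = (1/N)Σ_{i=1}^N τ_i. -/

import Mathlib

open Finset

noncomputable section

/-- Completely randomized assignments: vectors in `{0,1}^N` with exactly `N₁` ones. -/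
def CRD (N N₁ : ℕ) : Finset (Fin N → Bool) :=
  Finset.univ.filter fun T => (Finset.univ.filter fun i => T i = true).card = N₁

noncomputable def crdExp (N N₁ : ℕ) (f : (Fin N → Bool) → ℝ) : ℝ :=
  (∑ T ∈ CRD N N₁, f T) / ((CRD N N₁).card : ℝ)

noncomputable def crdVar (N N₁ : ℕ) (f : (Fin N → Bool) → ℝ) : ℝ :=
  crdExp N N₁ fun T => (f T - crdExp N N₁ f) ^ 2

/-- The difference-in-means estimator based on observed outcomes
`Yᵢobs = Tᵢ Yᵢ(1) + (1−Tᵢ) Yᵢ(0)`. -/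
noncomputable def tauhat (N N₁ : ℕ) (Y1 Y0 : Fin N → ℝ) (T : Fin N → Bool) : ℝ :=
  (∑ i, if T i then Y1 i else 0) / (N₁ : ℝ)
    - (∑ i, if T i then 0 else Y0 i) / ((N - N₁ : ℕ) : ℝ)

/-! With `aᵢ = Yᵢ(1)/N₁ + Yᵢ(0)/N₀` one has `τ̂ = ∑_{Tᵢ} aᵢ - ∑ᵢ Yᵢ(0)/N₀`, so `Var τ̂` is the
variance of a sum of `N₁` values drawn without replacement from `a`. The design is invariant
under permutations of the units, and every assignment treats exactly `N₁` units; double counting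
then gives `P(Tᵢ) = N₁/N` and `P(Tᵢ ∧ Tⱼ) = N₁(N₁-1)/(N(N-1))` for `i ≠ j`, hence
`Var τ̂ = N₁N₀/(N(N-1)) ∑ᵢ (aᵢ - ā)²`. Since `aᵢ - ā = uᵢ/N₁ + vᵢ/N₀` for the centred potential
outcomes `u, v`, the pointwise identity `N₁N₀/N (u/N₁ + v/N₀)² = u²/N₁ + v²/N₀ - (u - v)²/N`
(valid as `N = N₁ + N₀`) gives the formula. -/

namespace CRD

variable {N N₁ : ℕ}

lemma comp_perm_mem_iff (σ : Equiv.Perm (Fin N)) (T : Fin N → Bool) :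
    T ∘ σ ∈ CRD N N₁ ↔ T ∈ CRD N N₁ := by
  simp only [CRD, mem_filter, mem_univ, true_and, Function.comp_apply]
  rw [card_equiv σ (t := {i | T i = true}) (by simp)]

lemma sum_comp_perm {M : Type*} [AddCommMonoid M] (σ : Equiv.Perm (Fin N))
    (g : (Fin N → Bool) → M) : ∑ T ∈ CRD N N₁, g (T ∘ σ) = ∑ T ∈ CRD N N₁, g T :=
  sum_nbij' (· ∘ σ) (· ∘ σ.symm) (fun T hT => (comp_perm_mem_iff σ T).2 hT)
    (fun T hT => (comp_perm_mem_iff σ.symm T).2 hT) (fun T _ => by ext; simp)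
    (fun T _ => by ext; simp) (fun _ _ => rfl)

lemma nonempty (h : N₁ ≤ N) : (CRD N N₁).Nonempty :=
  ⟨fun i => decide ((i : ℕ) < N₁), by simp [CRD, Fin.card_filter_val_lt, h]⟩

lemma sum_indicator_of_mem {T : Fin N → Bool} (hT : T ∈ CRD N N₁) :
    ∑ i, (if T i then (1 : ℝ) else 0) = N₁ := by
  simp only [CRD, mem_filter, mem_univ, true_and] at hT
  simp [sum_boole, hT]

lemma sum_indicator_mul_eq_card_mul (i : Fin N) :
    (∑ T ∈ CRD N N₁, if T i then (1 : ℝ) else 0) * N = #(CRD N N₁) * N₁ := by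
  have hsymm : ∀ j, (∑ T ∈ CRD N N₁, if T j then (1 : ℝ) else 0)
      = ∑ T ∈ CRD N N₁, if T i then 1 else 0 := fun j => by
    simpa using sum_comp_perm (N₁ := N₁) (Equiv.swap i j) (fun T => if T i then (1 : ℝ) else 0)
  calc (∑ T ∈ CRD N N₁, if T i then (1 : ℝ) else 0) * N
      = ∑ j, ∑ T ∈ CRD N N₁, if T j then (1 : ℝ) else 0 := by simp [hsymm, mul_comm]
    _ = ∑ T ∈ CRD N N₁, ∑ j, if T j then (1 : ℝ) else 0 := sum_comm
    _ = #(CRD N N₁) * N₁ := by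
      rw [sum_congr rfl fun T hT => sum_indicator_of_mem hT, sum_const, nsmul_eq_mul]

lemma sum_indicator_pair_mul_add_eq {i j : Fin N} (hij : i ≠ j) :
    (∑ T ∈ CRD N N₁, (if T i then (1 : ℝ) else 0) * (if T j then 1 else 0)) * (N - 1)
      + ∑ T ∈ CRD N N₁, (if T i then (1 : ℝ) else 0)
      = (∑ T ∈ CRD N N₁, if T i then (1 : ℝ) else 0) * N₁ := by
  set pair := fun k => ∑ T ∈ CRD N N₁, (if T i then (1 : ℝ) else 0) * (if T k then 1 else 0)
  have hsymm : ∀ k ∈ univ.erase i, pair k = pair j := fun k hk => by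
    have hki : k ≠ i := ne_of_mem_erase hk
    simpa [pair, Equiv.swap_apply_of_ne_of_ne hij hki.symm] using
      sum_comp_perm (N₁ := N₁) (Equiv.swap j k)
        (fun T => (if T i then (1 : ℝ) else 0) * (if T j then 1 else 0))
  have hdiag : pair i = ∑ T ∈ CRD N N₁, if T i then (1 : ℝ) else 0 := by
    simp only [pair]
    exact sum_congr rfl fun T _ => by split_ifs <;> simp
  have hcard : ((univ.erase i).card : ℝ) = N - 1 := by
    rw [card_erase_of_mem (mem_univ i), card_univ, Fintype.card_fin,
      Nat.cast_pred (Fin.pos i)]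
  suffices pair j * (N - 1) + pair i = pair i * N₁ by rwa [hdiag] at this
  calc pair j * (N - 1) + pair i = ∑ k ∈ univ.erase i, pair k + pair i := by
        rw [sum_congr rfl hsymm, sum_const, nsmul_eq_mul, hcard, mul_comm]
    _ = ∑ k, pair k := sum_erase_add _ _ (mem_univ i)
    _ = ∑ T ∈ CRD N N₁, (if T i then (1 : ℝ) else 0) * ∑ k, if T k then 1 else 0 := by
      simp only [pair, mul_sum]; exact sum_comm
    _ = pair i * N₁ := by
      rw [hdiag, sum_mul]
      exact sum_congr rfl fun T hT => by rw [sum_indicator_of_mem hT]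

end CRD

lemma Finset.sum_sub_mean_sq {ι : Type*} (s : Finset ι) (x : ι → ℝ) :
    ∑ i ∈ s, (x i - (∑ j ∈ s, x j) / #s) ^ 2 = ∑ i ∈ s, x i ^ 2 - (∑ i ∈ s, x i) ^ 2 / #s := by
  rcases eq_or_ne (#s : ℝ) 0 with hs | hs
  · simp [card_eq_zero.mp (by exact_mod_cast hs)]
  simp only [sub_sq, sum_add_distrib, sum_sub_distrib, sum_const, nsmul_eq_mul, ← sum_mul,
    mul_assoc, ← mul_sum]
  field_simp
  ring

section

variable {N N₁ : ℕ}

lemma crdExp_sum {ι : Type*} (s : Finset ι) (g : ι → (Fin N → Bool) → ℝ) :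
    crdExp N N₁ (fun T => ∑ k ∈ s, g k T) = ∑ k ∈ s, crdExp N N₁ (g k) := by
  simp only [crdExp, sum_div]
  exact sum_comm

lemma crdExp_add (f g : (Fin N → Bool) → ℝ) :
    crdExp N N₁ (fun T => f T + g T) = crdExp N N₁ f + crdExp N N₁ g := by
  simp only [crdExp, sum_add_distrib, add_div]

lemma crdExp_const_mul (c : ℝ) (g : (Fin N → Bool) → ℝ) :
    crdExp N N₁ (fun T => c * g T) = c * crdExp N N₁ g := by
  simp only [crdExp, ← mul_sum, mul_div_assoc]

lemma crdExp_indicator (hN₁ : N₁ ≤ N) (i : Fin N) :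
    crdExp N N₁ (fun T => if T i then 1 else 0) = N₁ / N := by
  have hK : (#(CRD N N₁) : ℝ) ≠ 0 := by simpa using (CRD.nonempty hN₁).card_pos.ne'
  have hN : (N : ℝ) ≠ 0 := by simpa using (Fin.pos i).ne'
  rw [crdExp, div_eq_div_iff hK hN, CRD.sum_indicator_mul_eq_card_mul, mul_comm]

lemma crdExp_indicator_mul_indicator (hN₁ : N₁ ≤ N) {i j : Fin N} (hij : i ≠ j) :
    crdExp N N₁ (fun T => (if T i then 1 else 0) * (if T j then 1 else 0))
      = N₁ * (N₁ - 1) / (N * (N - 1)) := by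
  have hK : (#(CRD N N₁) : ℝ) ≠ 0 := by simpa using (CRD.nonempty hN₁).card_pos.ne'
  have hN : (N : ℝ) ≠ 0 := by simpa using (Fin.pos i).ne'
  have hN1 : (N : ℝ) - 1 ≠ 0 := by
    have : 1 < N := by have := Fin.val_ne_of_ne hij; omega
    rw [sub_ne_zero]; exact_mod_cast this.ne'
  have h1 := CRD.sum_indicator_mul_eq_card_mul (N₁ := N₁) i
  have h2 := CRD.sum_indicator_pair_mul_add_eq (N₁ := N₁) hij
  rw [crdExp, div_eq_div_iff hK (mul_ne_zero hN hN1)]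
  linear_combination (N : ℝ) * h2 + ((N₁ : ℝ) - 1) * h1

lemma crdVar_eq_crdExp_sq_sub_sq (f : (Fin N → Bool) → ℝ) :
    crdVar N N₁ f = crdExp N N₁ (fun T => f T ^ 2) - crdExp N N₁ f ^ 2 := by
  rcases eq_or_ne (#(CRD N N₁) : ℝ) 0 with hK | hK
  · simp [crdVar, crdExp, hK]
  have hexp : ∀ T, (f T - crdExp N N₁ f) ^ 2
      = f T ^ 2 + (-2 * crdExp N N₁ f) * f T + crdExp N N₁ f ^ 2 := fun T => by ring
  have hconst : crdExp N N₁ (fun _ => crdExp N N₁ f ^ 2) = crdExp N N₁ f ^ 2 := by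
    rw [crdExp, sum_const, nsmul_eq_mul, mul_div_cancel_left₀ _ hK]
  rw [crdVar, funext hexp, crdExp_add, crdExp_add, crdExp_const_mul, hconst]
  ring

lemma crdVar_sub_const (f : (Fin N → Bool) → ℝ) (c : ℝ) :
    crdVar N N₁ (fun T => f T - c) = crdVar N N₁ f := by
  rcases eq_or_ne (#(CRD N N₁) : ℝ) 0 with hK | hK
  · simp [crdVar, crdExp, hK]
  have hmean : crdExp N N₁ (fun T => f T - c) = crdExp N N₁ f - c := by
    rw [crdExp, crdExp, sum_sub_distrib, sum_const, nsmul_eq_mul, sub_div,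
      mul_div_cancel_left₀ _ hK]
  simp only [crdVar, hmean, sub_sub_sub_cancel_right]

lemma crdExp_sum_ite (hN₁ : N₁ ≤ N) (a : Fin N → ℝ) :
    crdExp N N₁ (fun T => ∑ i, if T i then a i else 0) = N₁ / N * ∑ i, a i := by
  have hind : ∀ T : Fin N → Bool,
      (∑ i, if T i then a i else 0) = ∑ i, a i * (if T i then 1 else 0) := fun T => by
    simp only [mul_boole]
  simp only [hind, crdExp_sum, crdExp_const_mul, crdExp_indicator hN₁, ← sum_mul, mul_comm]

lemma crdExp_sum_ite_sq (hN₁ : N₁ ≤ N) (a : Fin N → ℝ) :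
    crdExp N N₁ (fun T => (∑ i, if T i then a i else 0) ^ 2)
      = N₁ * (N₁ - 1) / (N * (N - 1)) * (∑ i, a i) ^ 2
        + (N₁ / N - N₁ * (N₁ - 1) / (N * (N - 1))) * ∑ i, a i ^ 2 := by
  set p₁ : ℝ := N₁ / N
  set p₂ : ℝ := N₁ * (N₁ - 1) / (N * (N - 1))
  have hsq : ∀ T : Fin N → Bool, (∑ i, if T i then a i else 0) ^ 2
      = ∑ i, ∑ j, a i * a j * ((if T i then 1 else 0) * (if T j then 1 else 0)) := fun T => by
    rw [sq, sum_mul_sum]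
    refine sum_congr rfl fun i _ => sum_congr rfl fun j _ => ?_
    split_ifs <;> ring
  have hmoment : ∀ i j : Fin N,
      crdExp N N₁ (fun T => (if T i then 1 else 0) * (if T j then 1 else 0))
        = p₂ + if i = j then p₁ - p₂ else 0 := fun i j => by
    by_cases hij : i = j
    · subst hij
      have hidem : ∀ b : Bool, (if b then (1 : ℝ) else 0) * (if b then 1 else 0)
          = if b then 1 else 0 := by simp
      simp only [hidem, crdExp_indicator hN₁, if_true]
      ring
    · rw [crdExp_indicator_mul_indicator hN₁ hij, if_neg hij, add_zero]
  simp only [hsq, crdExp_sum, crdExp_const_mul, hmoment]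
  simp only [mul_add, sum_add_distrib, mul_ite, mul_zero, sum_ite_eq, mem_univ, if_true]
  rw [sq, sum_mul_sum, mul_sum, mul_sum]
  congr 1 <;> refine sum_congr rfl fun i _ => ?_
  · rw [mul_sum]; exact sum_congr rfl fun j _ => by ring
  · ring

lemma crdVar_sum_ite (hN₁ : N₁ ≤ N) (hN : 1 < N) (a : Fin N → ℝ) :
    crdVar N N₁ (fun T => ∑ i, if T i then a i else 0)
      = N₁ * (N - N₁) / (N * (N - 1)) * ∑ i, (a i - (∑ j, a j) / N) ^ 2 := by
  have hdev : ∑ i, (a i - (∑ j, a j) / N) ^ 2 = ∑ i, a i ^ 2 - (∑ i, a i) ^ 2 / N := by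
    simpa using Finset.sum_sub_mean_sq univ a
  have hN0 : (N : ℝ) ≠ 0 := by positivity
  have hN1 : (N : ℝ) - 1 ≠ 0 := by
    rw [sub_ne_zero]; exact_mod_cast hN.ne'
  rw [crdVar_eq_crdExp_sq_sub_sq, crdExp_sum_ite_sq hN₁, crdExp_sum_ite hN₁, hdev]
  field_simp
  ring

end

lemma tauhat_eq (N N₁ : ℕ) (Y1 Y0 : Fin N → ℝ) :
    tauhat N N₁ Y1 Y0 = fun T =>
      (∑ i, if T i then Y1 i / N₁ + Y0 i / ((N - N₁ : ℕ) : ℝ) else 0)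
        - (∑ i, Y0 i) / ((N - N₁ : ℕ) : ℝ) := by
  funext T
  simp only [tauhat, sum_div, ← sum_sub_distrib]
  refine sum_congr rfl fun i _ => ?_
  split_ifs <;> ring

lemma sum_sq_div_add_div_sub_mean {ι : Type*} (s : Finset ι) (x y : ι → ℝ) {n₁ n₀ n : ℝ}
    (m : ℝ) (h₁ : n₁ ≠ 0) (h₀ : n₀ ≠ 0) (hn : n₁ + n₀ = n) (hn₀ : n ≠ 0) :
    n₁ * n₀ / n * ∑ i ∈ s, (x i / n₁ + y i / n₀ - (∑ j ∈ s, (x j / n₁ + y j / n₀)) / m) ^ 2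
      = (∑ i ∈ s, (x i - (∑ j ∈ s, x j) / m) ^ 2) / n₁
        + (∑ i ∈ s, (y i - (∑ j ∈ s, y j) / m) ^ 2) / n₀
        - (∑ i ∈ s, ((x i - y i) - (∑ j ∈ s, (x j - y j)) / m) ^ 2) / n := by
  have hcomb : ∀ i, x i / n₁ + y i / n₀ - (∑ j ∈ s, (x j / n₁ + y j / n₀)) / m
      = (x i - (∑ j ∈ s, x j) / m) / n₁ + (y i - (∑ j ∈ s, y j) / m) / n₀ := fun i => by
    rw [sum_add_distrib, ← sum_div, ← sum_div]; ring
  have hdiff : ∀ i, (x i - y i) - (∑ j ∈ s, (x j - y j)) / m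
      = (x i - (∑ j ∈ s, x j) / m) - (y i - (∑ j ∈ s, y j) / m) := fun i => by
    rw [sum_sub_distrib]; ring
  simp_rw [hcomb, hdiff]
  simp only [mul_sum, sum_div, ← sum_add_distrib, ← sum_sub_distrib]
  refine sum_congr rfl fun i _ => ?_
  subst hn
  field_simp
  ring

/-- The sampling variance of the difference-in-means estimator over
all randomizations is `Var(τ̂) = S₁²/N₁ + S₀²/N₀ − S_τ²/N`, where `S₁², S₀²` are
the finite population variances of the potential outcomes and `S_τ²` is the
finite population variance of the individual causal effects. -/
theorem stmt3 (N N₁ N₀ : ℕ) (hN : 2 ≤ N) (h1 : 1 ≤ N₁) (h2 : N₁ ≤ N - 1)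
    (hN₀ : N₀ = N - N₁) (Y1 Y0 : Fin N → ℝ) :
    crdVar N N₁ (tauhat N N₁ Y1 Y0)
      = ((∑ i, (Y1 i - (∑ j, Y1 j) / (N : ℝ)) ^ 2) / ((N : ℝ) - 1)) / (N₁ : ℝ)
        + ((∑ i, (Y0 i - (∑ j, Y0 j) / (N : ℝ)) ^ 2) / ((N : ℝ) - 1)) / (N₀ : ℝ)
        - ((∑ i, ((Y1 i - Y0 i) - (∑ j, (Y1 j - Y0 j)) / (N : ℝ)) ^ 2)
            / ((N : ℝ) - 1)) / (N : ℝ) := by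
  have hN₁N : N₁ ≤ N := by omega
  have hN₀cast : ((N - N₁ : ℕ) : ℝ) = N₀ := by rw [hN₀]
  have hsplit : (N₁ : ℝ) + N₀ = N := by rw [← hN₀cast, Nat.cast_sub hN₁N]; ring
  have key := sum_sq_div_add_div_sub_mean univ Y1 Y0 (N : ℝ) (by positivity)
    (by rw [← hN₀cast]; exact_mod_cast (by omega : N - N₁ ≠ 0)) hsplit (by positivity)
  rw [tauhat_eq, hN₀cast, crdVar_sub_const, crdVar_sum_ite hN₁N (by omega), ← hsplit,
    add_sub_cancel_left, hsplit, ← div_div]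
  linear_combination key / ((N : ℝ) - 1)
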